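/- arXiv:2411.18806 — 3 statements merged into one kernel-verified Lean document; each statement's English description precedes it below -/
import Mathlib

section
/- For every c ≥ 0, the empirical Rademacher complexity of the class of weight-bounded two-layer networks satisfies (1/n) · 2^{−n} ∑_{ε ∈ {−1,1}^n} sup_{W : max_{r ∈ [m]} ‖w_r‖ ≤ c} ∑_{i=1}^n ε_i f(W, x_i) ≤ (2m/(μ√n)) · c, where the supremum ranges over all W = (w_1, …, w_m) with max_{r ∈ [m]} ‖w_r‖ ≤ c. -/
open scoped RealInnerProductSpace BigOperators

namespace RadAux

noncomputable def sg (b : Bool) : ℝ := if b then 1 else -1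

lemma sg_not (b : Bool) : sg (!b) = - sg b := by cases b <;> simp [sg]

lemma sg_abs (b : Bool) : |sg b| = 1 := by cases b <;> simp [sg]

lemma sg_mul_self (b : Bool) : sg b * sg b = 1 := by cases b <;> simp [sg]

lemma bddAbove_image {α : Type*} {f : α → ℝ} {K : Set α} {C : ℝ}
    (h : ∀ w ∈ K, f w ≤ C) : BddAbove (f '' K) :=
  ⟨C, by rintro y ⟨w, hw, rfl⟩; exact h w hw⟩

lemma step_lemma {α : Type*} {K : Set α} (hK : K.Nonempty)
    (A u : α → ℝ) (CA Cu : ℝ)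
    (hA : ∀ w ∈ K, |A w| ≤ CA) (hu : ∀ w ∈ K, |u w| ≤ Cu)
    (φ : ℝ → ℝ) (hφ : LipschitzWith 1 φ) :
    sSup ((fun w => A w + φ (u w)) '' K) + sSup ((fun w => A w - φ (u w)) '' K)
      ≤ sSup ((fun w => A w + u w) '' K) + sSup ((fun w => A w - u w) '' K) := by
  have hφb : ∀ w ∈ K, |φ (u w)| ≤ Cu + |φ 0| := by
    intro w hw
    have h1 : |φ (u w) - φ 0| ≤ |u w| := by
      have := hφ.dist_le_mul (u w) 0
      simpa [Real.dist_eq] using this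
    calc |φ (u w)| = |(φ (u w) - φ 0) + φ 0| := by ring_nf
      _ ≤ |φ (u w) - φ 0| + |φ 0| := abs_add_le _ _
      _ ≤ Cu + |φ 0| := by have := hu w hw; linarith
  have b3 : BddAbove ((fun w => A w + u w) '' K) :=
    bddAbove_image (C := CA + Cu) fun w hw => by
      have h1 := abs_le.1 (hA w hw); have h2 := abs_le.1 (hu w hw)
      show A w + u w ≤ CA + Cu
      linarith [h1.2, h2.2]
  have b4 : BddAbove ((fun w => A w - u w) '' K) :=
    bddAbove_image (C := CA + Cu) fun w hw => by
      have h1 := abs_le.1 (hA w hw); have h2 := abs_le.1 (hu w hw)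
      show A w - u w ≤ CA + Cu
      linarith [h1.2, h2.1]
  refine le_of_forall_pos_le_add (fun δ hδ => ?_)
  obtain ⟨s1, hs1m, hs1⟩ := exists_lt_of_lt_csSup (hK.image _)
    (sub_lt_self (sSup ((fun w => A w + φ (u w)) '' K)) (half_pos hδ))
  obtain ⟨w1, hw1, rfl⟩ := hs1m
  obtain ⟨s2, hs2m, hs2⟩ := exists_lt_of_lt_csSup (hK.image _)
    (sub_lt_self (sSup ((fun w => A w - φ (u w)) '' K)) (half_pos hδ))
  obtain ⟨w2, hw2, rfl⟩ := hs2m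
  dsimp only at hs1 hs2
  have hlip : φ (u w1) - φ (u w2) ≤ |u w1 - u w2| := by
    have := hφ.dist_le_mul (u w1) (u w2)
    calc φ (u w1) - φ (u w2) ≤ |φ (u w1) - φ (u w2)| := le_abs_self _
      _ ≤ |u w1 - u w2| := by simpa [Real.dist_eq] using this
  have m3a : A w1 + u w1 ≤ sSup ((fun w => A w + u w) '' K) := le_csSup b3 ⟨w1, hw1, rfl⟩
  have m3b : A w2 + u w2 ≤ sSup ((fun w => A w + u w) '' K) := le_csSup b3 ⟨w2, hw2, rfl⟩
  have m4a : A w1 - u w1 ≤ sSup ((fun w => A w - u w) '' K) := le_csSup b4 ⟨w1, hw1, rfl⟩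
  have m4b : A w2 - u w2 ≤ sSup ((fun w => A w - u w) '' K) := le_csSup b4 ⟨w2, hw2, rfl⟩
  rcases le_total (u w2) (u w1) with h | h
  · have habs : |u w1 - u w2| = u w1 - u w2 := abs_of_nonneg (by linarith)
    linarith
  · have habs : |u w1 - u w2| = u w2 - u w1 := by rw [abs_sub_comm]; exact abs_of_nonneg (by linarith)
    linarith

lemma step_lemma' {α : Type*} {K : Set α} (hK : K.Nonempty)
    (A u : α → ℝ) (CA Cu : ℝ)
    (hA : ∀ w ∈ K, |A w| ≤ CA) (hu : ∀ w ∈ K, |u w| ≤ Cu)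
    (φ : ℝ → ℝ) (hφ : LipschitzWith 1 φ) (s : ℝ) (hs : s = 1 ∨ s = -1) :
    sSup ((fun w => A w + s * φ (u w)) '' K) + sSup ((fun w => A w + (-s) * φ (u w)) '' K)
      ≤ sSup ((fun w => A w + s * u w) '' K) + sSup ((fun w => A w + (-s) * u w) '' K) := by
  have main := step_lemma hK A u CA Cu hA hu φ hφ
  rcases hs with rfl | rfl
  · simpa only [one_mul, neg_one_mul, ← sub_eq_add_neg] using main
  · simp only [neg_neg, one_mul, neg_one_mul, ← sub_eq_add_neg]
    linarith

def flip {n : ℕ} (j : Fin n) (ε : Fin n → Bool) : Fin n → Bool :=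
  fun i => if i = j then !ε i else ε i

lemma flip_apply_ne {n : ℕ} (j : Fin n) (ε : Fin n → Bool) {i : Fin n} (h : i ≠ j) :
    flip j ε i = ε i := if_neg h

lemma flip_apply_self {n : ℕ} (j : Fin n) (ε : Fin n → Bool) : flip j ε j = !ε j := if_pos rfl

lemma flip_invol {n : ℕ} (j : Fin n) : Function.Involutive (flip j) := by
  intro ε; funext i; by_cases h : i = j <;> simp [flip, h]

lemma coord_step {α : Type*} {K : Set α} (hK : K.Nonempty) {n : ℕ} (j : Fin n)
    (h : Fin n → α → ℝ) (u : α → ℝ) (φ : ℝ → ℝ) (hφ : LipschitzWith 1 φ)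
    (C : ℝ) (hb : ∀ i, ∀ w ∈ K, |h i w| ≤ C) (hub : ∀ w ∈ K, |u w| ≤ C) :
    ∑ ε : Fin n → Bool,
      sSup ((fun w => ∑ i, sg (ε i) * (if i = j then φ (u w) else h i w)) '' K)
    ≤ ∑ ε : Fin n → Bool,
      sSup ((fun w => ∑ i, sg (ε i) * (if i = j then u w else h i w)) '' K) := by
  have hC0 : 0 ≤ C := by
    obtain ⟨w₀, hw₀⟩ := hK
    exact (abs_nonneg _).trans (hub w₀ hw₀)
  set L := fun ε : Fin n → Bool =>
    sSup ((fun w => ∑ i, sg (ε i) * (if i = j then φ (u w) else h i w)) '' K) with hLdef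
  set R := fun ε : Fin n → Bool =>
    sSup ((fun w => ∑ i, sg (ε i) * (if i = j then u w else h i w)) '' K) with hRdef
  have point : ∀ (σ : Fin n → Bool) (v : α → ℝ) (w : α),
      (∑ i, sg (σ i) * (if i = j then v w else h i w))
        = (∑ i ∈ Finset.univ.erase j, sg (σ i) * h i w) + sg (σ j) * v w := by
    intro σ v w
    rw [← Finset.add_sum_erase Finset.univ _ (Finset.mem_univ j), if_pos rfl, add_comm]
    congr 1
    exact Finset.sum_congr rfl fun i hi => by rw [if_neg (Finset.ne_of_mem_erase hi)]
  have key : ∀ ε : Fin n → Bool, L ε + L (flip j ε) ≤ R ε + R (flip j ε) := by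
    intro ε
    set A := fun w => ∑ i ∈ Finset.univ.erase j, sg (ε i) * h i w with hAdef
    have hAb : ∀ w ∈ K, |A w| ≤ (n : ℝ) * C := by
      intro w hw
      rw [hAdef]
      calc |∑ i ∈ Finset.univ.erase j, sg (ε i) * h i w|
          ≤ ∑ i ∈ Finset.univ.erase j, |sg (ε i) * h i w| := Finset.abs_sum_le_sum_abs _ _
        _ ≤ ∑ _i ∈ Finset.univ.erase j, C := by
            refine Finset.sum_le_sum fun i _ => ?_
            rw [abs_mul, sg_abs, one_mul]; exact hb i w hw
        _ = ((Finset.univ.erase j).card : ℝ) * C := by rw [Finset.sum_const, nsmul_eq_mul]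
        _ ≤ (n : ℝ) * C := by
            refine mul_le_mul_of_nonneg_right ?_ hC0
            exact_mod_cast (Finset.card_erase_le).trans (by simp)
    have pointflip : ∀ (v : α → ℝ) (w : α),
        (∑ i, sg (flip j ε i) * (if i = j then v w else h i w)) = A w + (- sg (ε j)) * v w := by
      intro v w
      rw [point (flip j ε) v w, flip_apply_self, sg_not]
      congr 1
      exact Finset.sum_congr rfl fun i hi => by
        rw [flip_apply_ne j ε (Finset.ne_of_mem_erase hi)]
    have E1 : (fun w => ∑ i, sg (ε i) * (if i = j then φ (u w) else h i w)) '' K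
        = (fun w => A w + sg (ε j) * φ (u w)) '' K :=
      Set.image_congr' (fun w => by rw [hAdef]; exact point ε (fun w => φ (u w)) w)
    have E2 : (fun w => ∑ i, sg (flip j ε i) * (if i = j then φ (u w) else h i w)) '' K
        = (fun w => A w + (- sg (ε j)) * φ (u w)) '' K :=
      Set.image_congr' (fun w => pointflip (fun w => φ (u w)) w)
    have E3 : (fun w => ∑ i, sg (ε i) * (if i = j then u w else h i w)) '' K
        = (fun w => A w + sg (ε j) * u w) '' K :=
      Set.image_congr' (fun w => by rw [hAdef]; exact point ε u w)
    have E4 : (fun w => ∑ i, sg (flip j ε i) * (if i = j then u w else h i w)) '' K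
        = (fun w => A w + (- sg (ε j)) * u w) '' K :=
      Set.image_congr' (fun w => pointflip u w)
    rw [hLdef, hRdef]
    dsimp only
    rw [E1, E2, E3, E4]
    exact step_lemma' hK A u ((n : ℝ) * C) C hAb hub φ hφ (sg (ε j))
      (by cases ε j <;> simp [sg])
  have hsum : ∀ F : (Fin n → Bool) → ℝ, ∑ ε, F (flip j ε) = ∑ ε, F ε :=
    fun F => Fintype.sum_bijective (flip j) (flip_invol j).bijective _ _ (fun ε => rfl)
  have two : (2 : ℝ) * ∑ ε, L ε ≤ 2 * ∑ ε, R ε := by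
    calc (2 : ℝ) * ∑ ε, L ε = ∑ ε, L ε + ∑ ε, (fun ε => L (flip j ε)) ε := by
          rw [hsum (fun ε => L ε)]; ring
      _ = ∑ ε, (L ε + L (flip j ε)) := by rw [← Finset.sum_add_distrib]
      _ ≤ ∑ ε, (R ε + R (flip j ε)) := Finset.sum_le_sum (fun ε _ => key ε)
      _ = ∑ ε, R ε + ∑ ε, (fun ε => R (flip j ε)) ε := by rw [Finset.sum_add_distrib]
      _ = 2 * ∑ ε, R ε := by rw [hsum (fun ε => R ε)]; ring
  linarith

lemma contraction {α : Type*} {K : Set α} (hK : K.Nonempty) {n : ℕ}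
    (g : Fin n → α → ℝ) (φ : ℝ → ℝ) (hφ : LipschitzWith 1 φ)
    (C : ℝ) (hg : ∀ i, ∀ w ∈ K, |g i w| ≤ C) :
    ∑ ε : Fin n → Bool, sSup ((fun w => ∑ i, sg (ε i) * φ (g i w)) '' K)
      ≤ ∑ ε : Fin n → Bool, sSup ((fun w => ∑ i, sg (ε i) * g i w) '' K) := by
  have hφabs : ∀ i, ∀ w ∈ K, |φ (g i w)| ≤ C + |φ 0| := by
    intro i w hw
    have h1 : |φ (g i w) - φ 0| ≤ |g i w| := by
      have := hφ.dist_le_mul (g i w) 0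
      simpa [Real.dist_eq] using this
    calc |φ (g i w)| = |(φ (g i w) - φ 0) + φ 0| := by ring_nf
      _ ≤ |φ (g i w) - φ 0| + |φ 0| := abs_add_le _ _
      _ ≤ C + |φ 0| := by have := hg i w hw; linarith
  have main : ∀ S : Finset (Fin n),
      ∑ ε : Fin n → Bool,
        sSup ((fun w => ∑ i, sg (ε i) * (if i ∈ S then φ (g i w) else g i w)) '' K)
      ≤ ∑ ε : Fin n → Bool, sSup ((fun w => ∑ i, sg (ε i) * g i w) '' K) := by
    intro S
    induction S using Finset.induction_on with
    | empty => simp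
    | @insert j S hj ih =>
      refine le_trans ?_ ih
      have hb : ∀ i, ∀ w ∈ K, |(fun i w => if i ∈ S then φ (g i w) else g i w) i w| ≤ C + |φ 0| := by
        intro i w hw
        by_cases hi : i ∈ S
        · simpa [hi] using hφabs i w hw
        · simp only [hi, if_false]
          exact (hg i w hw).trans (by linarith [abs_nonneg (φ 0)])
      have hub : ∀ w ∈ K, |g j w| ≤ C + |φ 0| :=
        fun w hw => (hg j w hw).trans (by linarith [abs_nonneg (φ 0)])
      have step := coord_step hK j (fun i w => if i ∈ S then φ (g i w) else g i w) (g j)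
        φ hφ (C + |φ 0|) hb hub
      calc ∑ ε : Fin n → Bool,
            sSup ((fun w => ∑ i, sg (ε i) * (if i ∈ insert j S then φ (g i w) else g i w)) '' K)
          = ∑ ε : Fin n → Bool,
            sSup ((fun w => ∑ i, sg (ε i) *
              (if i = j then φ (g j w) else (if i ∈ S then φ (g i w) else g i w))) '' K) := by
            refine Finset.sum_congr rfl fun ε _ => ?_
            congr 1
            refine Set.image_congr' (fun w => ?_)
            refine Finset.sum_congr rfl fun i _ => ?_
            by_cases hij : i = j
            · subst hij; simp [hj]
            · simp [hij, Finset.mem_insert]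
        _ ≤ ∑ ε : Fin n → Bool,
            sSup ((fun w => ∑ i, sg (ε i) *
              (if i = j then g j w else (if i ∈ S then φ (g i w) else g i w))) '' K) := step
        _ = ∑ ε : Fin n → Bool,
            sSup ((fun w => ∑ i, sg (ε i) * (if i ∈ S then φ (g i w) else g i w)) '' K) := by
            refine Finset.sum_congr rfl fun ε _ => ?_
            congr 1
            refine Set.image_congr' (fun w => ?_)
            refine Finset.sum_congr rfl fun i _ => ?_
            by_cases hij : i = j
            · subst hij; simp [hj]
            · simp [hij]
  have := main Finset.univ
  simpa using this

lemma sum_sg_mul {n : ℕ} {i k : Fin n} (hik : i ≠ k) :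
    ∑ ε : Fin n → Bool, sg (ε i) * sg (ε k) = 0 := by
  have h := Fintype.sum_bijective (flip i) (flip_invol i).bijective
    (fun ε : Fin n → Bool => sg (ε i) * sg (ε k))
    (fun ε : Fin n → Bool => -(sg (ε i) * sg (ε k))) ?_
  · have h2 : ∑ ε : Fin n → Bool, -(sg (ε i) * sg (ε k))
        = -∑ ε : Fin n → Bool, sg (ε i) * sg (ε k) := by
      rw [Finset.sum_neg_distrib]
    rw [h2] at h
    linarith
  · intro ε
    rw [flip_apply_self, flip_apply_ne i ε (Ne.symm hik), sg_not]
    ring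

lemma sum_sg_sq {n : ℕ} (i : Fin n) :
    ∑ ε : Fin n → Bool, sg (ε i) * sg (ε i) = 2 ^ n := by
  have : ∀ ε : Fin n → Bool, sg (ε i) * sg (ε i) = 1 := fun ε => sg_mul_self _
  rw [Finset.sum_congr rfl (fun ε _ => this ε), Finset.sum_const, Finset.card_univ]
  simp [Fintype.card_fun]

end RadAux

open RadAux

/-- For every `c ≥ 0`, the empirical Rademacher complexity of
the class of weight-bounded two-layer networks satisfies
`(1/n) · 2^{−n} ∑_{ε ∈ {−1,1}^n} sup_{W : max_r ‖w_r‖ ≤ c} ∑_i ε_i f(W, x_i)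
  ≤ (2m/(μ√n)) · c`. -/
theorem rademacher_complexity_bound
    {d m n : ℕ} (hm : 0 < m) (hn : 0 < n)
    (μ : ℝ) (hμ : 0 < μ)
    (a : Fin m → ℝ) (ha : ∀ r, a r = 1 ∨ a r = -1)
    (ζ : ℝ → ℝ) (hζ : LipschitzWith 1 ζ) (hζ0 : ζ 0 = 0)
    (x : Fin n → EuclideanSpace ℝ (Fin d)) (hx : ∀ i, ‖x i‖ = 1)
    (c : ℝ) (hc : 0 ≤ c) :
    (1 / n) * (1 / 2 ^ n) *
      ∑ ε : Fin n → Bool,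
        sSup {s : ℝ | ∃ W : Fin m → EuclideanSpace ℝ (Fin d),
          (∀ r, ‖W r‖ ≤ c) ∧
          s = ∑ i, (if ε i then (1 : ℝ) else -1) *
                ((1 / μ) * ∑ r, a r * ζ ⟪W r, x i⟫)} ≤
      (2 * m / (μ * Real.sqrt n)) * c := by
  have hsg : ∀ b : Bool, (if b then (1 : ℝ) else -1) = sg b := fun b => rfl
  simp only [hsg]
  set K : Set (EuclideanSpace ℝ (Fin d)) := Metric.closedBall 0 c with hKdef
  have hK : K.Nonempty := ⟨0, Metric.mem_closedBall_self hc⟩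
  have hmem : ∀ w : EuclideanSpace ℝ (Fin d), w ∈ K ↔ ‖w‖ ≤ c := fun w =>
    mem_closedBall_zero_iff
  have hζabs : ∀ t, |ζ t| ≤ |t| := by
    intro t; have := hζ.dist_le_mul t 0; simpa [Real.dist_eq, hζ0] using this
  have hinner : ∀ (i : Fin n) (w : EuclideanSpace ℝ (Fin d)), w ∈ K → |⟪w, x i⟫| ≤ c := by
    intro i w hw
    calc |⟪w, x i⟫| ≤ ‖w‖ * ‖x i‖ := abs_real_inner_le_norm _ _
      _ = ‖w‖ := by rw [hx i, mul_one]
      _ ≤ c := (hmem w).1 hw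
  have hζc : ∀ (i : Fin n) (w : EuclideanSpace ℝ (Fin d)), w ∈ K → |ζ ⟪w, x i⟫| ≤ c :=
    fun i w hw => (hζabs _).trans (hinner i w hw)
  have habs_ar : ∀ r, |a r| = 1 := fun r => by rcases ha r with h | h <;> simp [h]
  have bddTr : ∀ (r : Fin m) (ε : Fin n → Bool),
      BddAbove ((fun w => ∑ i, sg (ε i) * (a r * ζ ⟪w, x i⟫)) '' K) := by
    intro r ε
    refine bddAbove_image (C := (n : ℝ) * c) fun w hw => ?_
    calc ∑ i, sg (ε i) * (a r * ζ ⟪w, x i⟫)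
        ≤ ∑ i, |sg (ε i) * (a r * ζ ⟪w, x i⟫)| := Finset.sum_le_sum fun i _ => le_abs_self _
      _ ≤ ∑ _i : Fin n, c := Finset.sum_le_sum fun i _ => by
          rw [abs_mul, abs_mul, sg_abs, habs_ar, one_mul, one_mul]; exact hζc i w hw
      _ = (n : ℝ) * c := by
          rw [Finset.sum_const, Finset.card_univ, Fintype.card_fin, nsmul_eq_mul]
  have Trnonneg : ∀ (r : Fin m) (ε : Fin n → Bool),
      0 ≤ sSup ((fun w => ∑ i, sg (ε i) * (a r * ζ ⟪w, x i⟫)) '' K) := by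
    intro r ε
    have h0 : (fun w : EuclideanSpace ℝ (Fin d) => ∑ i, sg (ε i) * (a r * ζ ⟪w, x i⟫)) 0 = 0 := by
      simp [hζ0]
    have := le_csSup (bddTr r ε) (Set.mem_image_of_mem _ (Metric.mem_closedBall_self hc))
    simpa [inner_zero_left, hζ0] using this
  have step1 : ∀ ε : Fin n → Bool,
      sSup {s : ℝ | ∃ W : Fin m → EuclideanSpace ℝ (Fin d),
          (∀ r, ‖W r‖ ≤ c) ∧
          s = ∑ i, sg (ε i) * ((1 / μ) * ∑ r, a r * ζ ⟪W r, x i⟫)}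
      ≤ (1 / μ) * ∑ r, sSup ((fun w => ∑ i, sg (ε i) * (a r * ζ ⟪w, x i⟫)) '' K) := by
    intro ε
    refine Real.sSup_le ?_
      (mul_nonneg (by positivity) (Finset.sum_nonneg fun r _ => Trnonneg r ε))
    rintro s ⟨W, hW, rfl⟩
    have expand : ∑ i, sg (ε i) * ((1 / μ) * ∑ r, a r * ζ ⟪W r, x i⟫)
        = (1 / μ) * ∑ r, ∑ i, sg (ε i) * (a r * ζ ⟪W r, x i⟫) := by
      simp only [Finset.mul_sum]
      rw [Finset.sum_comm]
      exact Finset.sum_congr rfl fun r _ => Finset.sum_congr rfl fun i _ => by ring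
    rw [expand]
    refine mul_le_mul_of_nonneg_left (Finset.sum_le_sum fun r _ => ?_) (by positivity)
    exact le_csSup (bddTr r ε) ⟨W r, (hmem _).2 (hW r), rfl⟩
  have fold : ∀ r : Fin m,
      (∑ ε : Fin n → Bool, sSup ((fun w => ∑ i, sg (ε i) * (a r * ζ ⟪w, x i⟫)) '' K))
        = ∑ ε : Fin n → Bool, sSup ((fun w => ∑ i, sg (ε i) * ζ ⟪w, x i⟫) '' K) := by
    intro r
    rcases ha r with h1 | h1
    · exact Finset.sum_congr rfl fun ε _ => by simp [h1]
    · have hinv : Function.Involutive (fun ε : Fin n → Bool => fun i => !ε i) := fun ε => by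
        funext i; simp
      refine Fintype.sum_bijective _ hinv.bijective _ _ fun ε => ?_
      congr 1
      refine Set.image_congr' fun w => ?_
      refine Finset.sum_congr rfl fun i _ => ?_
      simp only [h1]
      rw [sg_not]
      ring
  have step2 : ∑ ε : Fin n → Bool, sSup ((fun w => ∑ i, sg (ε i) * ζ ⟪w, x i⟫) '' K)
      ≤ ∑ ε : Fin n → Bool, sSup ((fun w => ∑ i, sg (ε i) * ⟪w, x i⟫) '' K) :=
    contraction hK (fun i w => ⟪w, x i⟫) ζ hζ c (fun i w hw => hinner i w hw)
  have step3 : ∀ ε : Fin n → Bool,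
      sSup ((fun w => ∑ i, sg (ε i) * ⟪w, x i⟫) '' K) ≤ c * ‖∑ i, sg (ε i) • x i‖ := by
    intro ε
    refine Real.sSup_le ?_ (by positivity)
    rintro s ⟨w, hw, rfl⟩
    have hform : ∑ i, sg (ε i) * ⟪w, x i⟫ = ⟪w, ∑ i, sg (ε i) • x i⟫ := by
      rw [inner_sum]
      exact Finset.sum_congr rfl fun i _ => (real_inner_smul_right _ _ _).symm
    dsimp only
    rw [hform]
    calc ⟪w, ∑ i, sg (ε i) • x i⟫ ≤ ‖w‖ * ‖∑ i, sg (ε i) • x i‖ := real_inner_le_norm _ _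
      _ ≤ c * ‖∑ i, sg (ε i) • x i‖ :=
          mul_le_mul_of_nonneg_right ((hmem w).1 hw) (norm_nonneg _)
  have hnorm : ∀ ε : Fin n → Bool,
      ‖∑ i, sg (ε i) • x i‖ ^ 2 = ∑ i, ∑ k, (sg (ε i) * sg (ε k)) * ⟪x i, x k⟫ := by
    intro ε
    rw [← real_inner_self_eq_norm_sq, sum_inner]
    refine Finset.sum_congr rfl fun i _ => ?_
    rw [real_inner_smul_left, inner_sum, Finset.mul_sum]
    refine Finset.sum_congr rfl fun k _ => ?_
    rw [real_inner_smul_right]; ring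
  have normsq : ∑ ε : Fin n → Bool, ‖∑ i, sg (ε i) • x i‖ ^ 2 = 2 ^ n * n := by
    calc ∑ ε : Fin n → Bool, ‖∑ i, sg (ε i) • x i‖ ^ 2
        = ∑ ε : Fin n → Bool, ∑ i, ∑ k, (sg (ε i) * sg (ε k)) * ⟪x i, x k⟫ :=
          Finset.sum_congr rfl fun ε _ => hnorm ε
      _ = ∑ i, ∑ k, ∑ ε : Fin n → Bool, (sg (ε i) * sg (ε k)) * ⟪x i, x k⟫ := by
          rw [Finset.sum_comm]
          exact Finset.sum_congr rfl fun i _ => Finset.sum_comm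
      _ = ∑ i, ∑ k, (∑ ε : Fin n → Bool, sg (ε i) * sg (ε k)) * ⟪x i, x k⟫ := by
          refine Finset.sum_congr rfl fun i _ => Finset.sum_congr rfl fun k _ => ?_
          exact (Finset.sum_mul _ _ _).symm
      _ = ∑ i : Fin n, (2 ^ n : ℝ) * ⟪x i, x i⟫ := by
          refine Finset.sum_congr rfl fun i _ => ?_
          rw [Finset.sum_eq_single_of_mem i (Finset.mem_univ i)
            (fun k _ hki => by rw [sum_sg_mul (Ne.symm hki), zero_mul]), sum_sg_sq]
      _ = 2 ^ n * n := by
          have hxx : ∀ i : Fin n, (⟪x i, x i⟫ : ℝ) = 1 := fun i => by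
            rw [real_inner_self_eq_norm_sq, hx i, one_pow]
          simp only [hxx, mul_one]
          rw [Finset.sum_const, Finset.card_univ, Fintype.card_fin, nsmul_eq_mul]
          ring
  have hvnonneg : 0 ≤ ∑ ε : Fin n → Bool, ‖∑ i, sg (ε i) • x i‖ :=
    Finset.sum_nonneg fun ε _ => norm_nonneg _
  have step4 : ∑ ε : Fin n → Bool, ‖∑ i, sg (ε i) • x i‖ ≤ 2 ^ n * Real.sqrt n := by
    have cs := Finset.sum_mul_sq_le_sq_mul_sq Finset.univ
      (fun _ : Fin n → Bool => (1 : ℝ)) (fun ε => ‖∑ i, sg (ε i) • x i‖)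
    simp only [one_mul, one_pow] at cs
    have card2 : ∑ _ε : Fin n → Bool, (1 : ℝ) = 2 ^ n := by
      rw [Finset.sum_const, Finset.card_univ, nsmul_eq_mul, mul_one]
      simp [Fintype.card_fun]
    rw [card2, normsq] at cs
    calc ∑ ε : Fin n → Bool, ‖∑ i, sg (ε i) • x i‖
        = Real.sqrt ((∑ ε : Fin n → Bool, ‖∑ i, sg (ε i) • x i‖) ^ 2) :=
          (Real.sqrt_sq hvnonneg).symm
      _ ≤ Real.sqrt ((2 ^ n : ℝ) * (2 ^ n * n)) := Real.sqrt_le_sqrt cs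
      _ = 2 ^ n * Real.sqrt n := by
          rw [show (2 ^ n : ℝ) * (2 ^ n * n) = ((2 : ℝ) ^ n) ^ 2 * n by ring,
            Real.sqrt_mul (by positivity), Real.sqrt_sq (by positivity)]
  have chain : ∑ ε : Fin n → Bool,
      sSup {s : ℝ | ∃ W : Fin m → EuclideanSpace ℝ (Fin d),
          (∀ r, ‖W r‖ ≤ c) ∧
          s = ∑ i, sg (ε i) * ((1 / μ) * ∑ r, a r * ζ ⟪W r, x i⟫)}
      ≤ (1 / μ) * (m * (c * (2 ^ n * Real.sqrt n))) := by
    calc ∑ ε : Fin n → Bool,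
        sSup {s : ℝ | ∃ W : Fin m → EuclideanSpace ℝ (Fin d),
          (∀ r, ‖W r‖ ≤ c) ∧
          s = ∑ i, sg (ε i) * ((1 / μ) * ∑ r, a r * ζ ⟪W r, x i⟫)}
        ≤ ∑ ε : Fin n → Bool,
            (1 / μ) * ∑ r, sSup ((fun w => ∑ i, sg (ε i) * (a r * ζ ⟪w, x i⟫)) '' K) :=
          Finset.sum_le_sum fun ε _ => step1 ε
      _ = (1 / μ) * ∑ r : Fin m, ∑ ε : Fin n → Bool,
            sSup ((fun w => ∑ i, sg (ε i) * (a r * ζ ⟪w, x i⟫)) '' K) := by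
          rw [← Finset.mul_sum, Finset.sum_comm]
      _ = (1 / μ) * ∑ _r : Fin m, ∑ ε : Fin n → Bool,
            sSup ((fun w => ∑ i, sg (ε i) * ζ ⟪w, x i⟫) '' K) :=
          congrArg _ (Finset.sum_congr rfl fun r _ => fold r)
      _ = (1 / μ) * ((m : ℝ) * ∑ ε : Fin n → Bool,
            sSup ((fun w => ∑ i, sg (ε i) * ζ ⟪w, x i⟫) '' K)) := by
          rw [Finset.sum_const, Finset.card_univ, Fintype.card_fin, nsmul_eq_mul]
      _ ≤ (1 / μ) * ((m : ℝ) * ∑ ε : Fin n → Bool,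
            sSup ((fun w => ∑ i, sg (ε i) * ⟪w, x i⟫) '' K)) :=
          mul_le_mul_of_nonneg_left (mul_le_mul_of_nonneg_left step2 m.cast_nonneg)
            (by positivity)
      _ ≤ (1 / μ) * ((m : ℝ) * ∑ ε : Fin n → Bool, c * ‖∑ i, sg (ε i) • x i‖) :=
          mul_le_mul_of_nonneg_left (mul_le_mul_of_nonneg_left
            (Finset.sum_le_sum fun ε _ => step3 ε) m.cast_nonneg) (by positivity)
      _ = (1 / μ) * ((m : ℝ) * (c * ∑ ε : Fin n → Bool, ‖∑ i, sg (ε i) • x i‖)) := by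
          rw [← Finset.mul_sum]
      _ ≤ (1 / μ) * ((m : ℝ) * (c * (2 ^ n * Real.sqrt n))) :=
          mul_le_mul_of_nonneg_left (mul_le_mul_of_nonneg_left
            (mul_le_mul_of_nonneg_left step4 hc) m.cast_nonneg) (by positivity)
  refine le_trans (mul_le_mul_of_nonneg_left chain (by positivity)) ?_
  have hn' : (0 : ℝ) < n := by exact_mod_cast hn
  have h2n : (0 : ℝ) < 2 ^ n := by positivity
  set t := Real.sqrt n with ht
  have hsn : 0 < t := by rw [ht]; exact Real.sqrt_pos.2 hn'
  have hsq : t * t = (n : ℝ) := by rw [ht]; exact Real.mul_self_sqrt hn'.le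
  rw [← hsq]
  have heq : (1 / (t * t)) * (1 / 2 ^ n) * ((1 / μ) * ((m : ℝ) * (c * (2 ^ n * t))))
      = (m : ℝ) * c / (μ * t) := by
    field_simp
  rw [heq]
  have hrw : 2 * (m : ℝ) / (μ * t) * c = 2 * ((m : ℝ) * c / (μ * t)) := by
    ring
  rw [hrw]
  have hpos : 0 ≤ (m : ℝ) * c / (μ * t) := by positivity
  linarith
end

section
/- Let A > 0, B ≥ 0, η > 0, 0 < λ⁻ ≤ λ⁺, θ ≥ 0, set ρ = 1 − η λ⁻ and σ = η λ⁺ θ, assume ρ ∈ (0, 1), and let α ≥ (σ/ρ)(θ + B/A). Then (1 − η λ⁻ cos²θ) A + η λ⁻ |sin θ · cos θ| B ≤ ρ (1 + α) A. -/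
/-- One-step contraction bound for the component of the
training-error vector along the top eigenvector of the NTK matrix:
`(1 − η λ⁻ cos²θ) A + η λ⁻ |sin θ · cos θ| B ≤ ρ (1 + α) A`. -/
theorem parallel_component_contraction_bound
    (A B η lamMinus lamPlus θ ρ σ α : ℝ)
    (hA : 0 < A) (hB : 0 ≤ B) (hη : 0 < η)
    (hlamMinus : 0 < lamMinus) (hlam : lamMinus ≤ lamPlus)
    (hθ : 0 ≤ θ)
    (hρ : ρ = 1 - η * lamMinus) (hσ : σ = η * lamPlus * θ)
    (hρ01 : ρ ∈ Set.Ioo (0 : ℝ) 1)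
    (hα : α ≥ (σ / ρ) * (θ + B / A)) :
    (1 - η * lamMinus * Real.cos θ ^ 2) * A
        + η * lamMinus * |Real.sin θ * Real.cos θ| * B ≤
      ρ * (1 + α) * A := by
  obtain ⟨hρ0, hρ1⟩ := hρ01
  have hsin : |Real.sin θ| ≤ θ := by
    calc |Real.sin θ| ≤ |θ| := Real.abs_sin_le_abs
      _ = θ := abs_of_nonneg hθ
  have hcos : |Real.cos θ| ≤ 1 := Real.abs_cos_le_one θ
  have hsc : |Real.sin θ * Real.cos θ| ≤ θ := by
    rw [abs_mul]
    calc |Real.sin θ| * |Real.cos θ| ≤ θ * 1 :=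
      mul_le_mul hsin hcos (abs_nonneg _) hθ
    _ = θ := mul_one θ
  have hsin2 : Real.sin θ ^ 2 ≤ θ ^ 2 := by
    rw [← sq_abs]
    exact pow_le_pow_left₀ (abs_nonneg _) hsin 2
  have hpyth : Real.cos θ ^ 2 = 1 - Real.sin θ ^ 2 := by
    have := Real.sin_sq_add_cos_sq θ; linarith
  have hρα : ρ * α ≥ σ * (θ + B / A) := by
    calc σ * (θ + B / A) = (σ / ρ) * (θ + B / A) * ρ := by field_simp
      _ ≤ α * ρ := by nlinarith
      _ = ρ * α := mul_comm _ _
  have hBA : B / A * A = B := div_mul_cancel₀ B (ne_of_gt hA)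
  have hσθ : σ ≥ η * lamMinus * θ := by
    rw [hσ]; nlinarith [mul_le_mul_of_nonneg_right hlam hθ, hη.le]
  have key : ρ * (1 + α) * A ≥ ρ * A + σ * θ * A + σ * B := by
    have : σ * (θ + B / A) * A = σ * θ * A + σ * B := by
      field_simp
    nlinarith [mul_le_mul_of_nonneg_right hρα (le_of_lt hA)]
  have h1 : (1 - η * lamMinus * Real.cos θ ^ 2) * A ≤ ρ * A + σ * θ * A := by
    rw [hρ, hpyth]
    have h3 : η * lamMinus * Real.sin θ ^ 2 * A ≤ σ * θ * A := by
      rw [hσ]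
      have : lamMinus * Real.sin θ ^ 2 ≤ lamPlus * θ ^ 2 := by
        nlinarith [sq_nonneg (Real.sin θ), sq_nonneg θ]
      nlinarith [mul_le_mul_of_nonneg_right this (mul_nonneg hη.le hA.le)]
    nlinarith
  have h2 : η * lamMinus * |Real.sin θ * Real.cos θ| * B ≤ σ * B := by
    have : η * lamMinus * |Real.sin θ * Real.cos θ| ≤ σ := by
      calc η * lamMinus * |Real.sin θ * Real.cos θ| ≤ η * lamMinus * θ := by
            nlinarith [mul_pos hη hlamMinus, abs_nonneg (Real.sin θ * Real.cos θ)]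
        _ ≤ σ := hσθ
    exact mul_le_mul_of_nonneg_right this hB
  linarith
end

section
/- Assume moreover that the training-error vector evolves linearly under the step, v' = (I − η H) v, where H is a real symmetric positive semidefinite n×n matrix all of whose eigenvalues λ satisfy η λ ≤ 1, and let u be a unit eigenvector of H with eigenvalue λ₁ ≥ λ⁻ > 0. Set A = |⟨v, u⟩|, B = ‖v − ⟨v, u⟩ u‖, ρ = 1 − η λ⁻, Φ = 2m/(μ√n), ν₁ = 4 M₁ Φ max_{r ∈ [m]} ‖w_r‖ + 4 M₁ (Φ/μ) η ‖v‖₁, and ω₁ = (ρ² A² + B²)/n + ν₁, where M₁ ≥ 0. Then after one gradient-descent step, ‖v'‖²/n + 4 M₁ Φ · max(max_{r ∈ [m]} ‖w_r‖, max_{r ∈ [m]} ‖w_r'‖) ≤ ω₁. -/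
/-! Write `v = ⟪v, u⟫ • u + p` with `p ⟂ u`. The symmetric matrix `I - ηH` maps `u` to
`(1 - ηλ₁) • u`, keeps `p` orthogonal to `u`, and has its eigenvalues in `[0, 1]`, so it does not
increase `‖p‖`; Pythagoras then gives `‖v'‖² ≤ (1 - ηλ₁)² ⟪v, u⟫² + ‖p‖²` with
`|1 - ηλ₁| ≤ ρ`. On the weights, `|a_r ζ'| ≤ 1` and `‖x_i‖ = 1` bound each update by
`(η/μ) ‖v‖₁`, which bounds the maximal weight norm over both times. -/

open scoped RealInnerProductSpace

section InnerProductSpace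

variable {E : Type*} [NormedAddCommGroup E] [InnerProductSpace ℝ E]

theorem OrthonormalBasis.inner_apply_eq_of_apply_eq_smul {ι : Type*} [Fintype ι] [DecidableEq ι]
    (b : OrthonormalBasis ι ℝ E) {T : E →ₗ[ℝ] E} {μ : ι → ℝ} (hTb : ∀ i, T (b i) = μ i • b i)
    (i : ι) (p : E) : ⟪b i, T p⟫ = μ i * ⟪b i, p⟫ := by
  conv_lhs => rw [← b.sum_repr' p]
  simp [hTb, inner_sum, inner_smul_right, b.inner_eq_ite, mul_comm]

theorem OrthonormalBasis.norm_apply_le_of_apply_eq_smul {ι : Type*} [Fintype ι] [DecidableEq ι]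
    (b : OrthonormalBasis ι ℝ E) {T : E →ₗ[ℝ] E} {μ : ι → ℝ} (hTb : ∀ i, T (b i) = μ i • b i)
    (hμ : ∀ i, |μ i| ≤ 1) (p : E) : ‖T p‖ ≤ ‖p‖ := by
  refine (sq_le_sq₀ (norm_nonneg _) (norm_nonneg _)).mp ?_
  rw [← b.sum_sq_inner_right, ← b.sum_sq_inner_right]
  refine Finset.sum_le_sum fun i _ => ?_
  rw [b.inner_apply_eq_of_apply_eq_smul hTb, mul_pow]
  exact mul_le_of_le_one_left (sq_nonneg _) ((sq_le_one_iff_abs_le_one _).mpr (hμ i))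

theorem LinearMap.IsSymmetric.norm_sq_apply_le {T : E →ₗ[ℝ] E} (hT : T.IsSymmetric)
    (hT1 : ∀ p, ‖T p‖ ≤ ‖p‖) {u : E} (hu : ‖u‖ = 1) {α ρ : ℝ} (hTu : T u = α • u)
    (hα : |α| ≤ ρ) (v : E) :
    ‖T v‖ ^ 2 ≤ ρ ^ 2 * ⟪v, u⟫ ^ 2 + ‖v - ⟪v, u⟫ • u‖ ^ 2 := by
  set c := ⟪v, u⟫
  set p := v - c • u
  have hup : ⟪u, p⟫ = 0 := by
    simp [p, c, inner_sub_right, inner_smul_right, hu, real_inner_comm]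
  have hTv : T v = (c * α) • u + T p := by
    rw [show v = c • u + p by simp [p], map_add, map_smul, hTu, smul_smul]
  have horth : ⟪(c * α) • u, T p⟫ = 0 := by
    rw [inner_smul_left, ← hT, hTu, inner_smul_left, hup]; simp
  have hαρ : α ^ 2 ≤ ρ ^ 2 := sq_le_sq' (abs_le.mp hα).1 (abs_le.mp hα).2
  calc ‖T v‖ ^ 2 = (c * α) ^ 2 + ‖T p‖ ^ 2 := by
        rw [hTv, norm_add_sq_real, horth, norm_smul, hu, mul_one, Real.norm_eq_abs, sq_abs]
        ring
    _ ≤ ρ ^ 2 * c ^ 2 + ‖p‖ ^ 2 := by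
        gcongr
        · nlinarith [sq_nonneg c]
        · exact hT1 p

end InnerProductSpace

open Matrix

theorem Matrix.PosSemidef.norm_toEuclideanLin_one_sub_smul_apply_le {n : Type*} [Fintype n]
    [DecidableEq n] {H : Matrix n n ℝ} (hH : H.PosSemidef) {η : ℝ} (hη : 0 ≤ η)
    (heig : ∀ (lam : ℝ) (z : EuclideanSpace ℝ n), z ≠ 0 → H *ᵥ z = lam • z → η * lam ≤ 1)
    (p : EuclideanSpace ℝ n) : ‖toEuclideanLin (1 - η • H) p‖ ≤ ‖p‖ := by
  set b := hH.1.eigenvectorBasis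
  have hTb : ∀ i, toEuclideanLin (1 - η • H) (b i) = (1 - η * hH.1.eigenvalues i) • b i := by
    intro i
    ext j
    simp [b, hH.1.mulVec_eigenvectorBasis, sub_smul, mul_assoc]
  refine b.norm_apply_le_of_apply_eq_smul hTb (fun i => abs_le.mpr ⟨?_, ?_⟩) p
  · linarith [heig _ _ (b.orthonormal.ne_zero i) (hH.1.mulVec_eigenvectorBasis i)]
  · linarith [mul_nonneg hη (hH.eigenvalues_nonneg i)]

theorem norm_sub_smul_sum_mul_smul_le {ι F : Type*} [Fintype ι] [SeminormedAddCommGroup F]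
    [NormedSpace ℝ F] (w : F) {x : ι → F} (hx : ∀ i, ‖x i‖ ≤ 1) {κ : ℝ} (hκ : 0 ≤ κ)
    (c : ι → ℝ) {g : ι → ℝ} (hg : ∀ i, |g i| ≤ 1) :
    ‖w - κ • ∑ i, (c i * g i) • x i‖ ≤ ‖w‖ + κ * ∑ i, |c i| := by
  have hsum : ‖∑ i, (c i * g i) • x i‖ ≤ ∑ i, |c i| := by
    refine (norm_sum_le _ _).trans (Finset.sum_le_sum fun i _ => ?_)
    rw [norm_smul, Real.norm_eq_abs, abs_mul, mul_assoc]
    exact mul_le_of_le_one_right (abs_nonneg _) (mul_le_one₀ (hg i) (norm_nonneg _) (hx i))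
  calc ‖w - κ • ∑ i, (c i * g i) • x i‖ ≤ ‖w‖ + κ * ‖∑ i, (c i * g i) • x i‖ := by
        rw [← norm_smul_of_nonneg hκ]; exact norm_sub_le _ _
    _ ≤ ‖w‖ + κ * ∑ i, |c i| := by gcongr

theorem Finset.max_sup'_le_sup'_add {ι : Type*} {s : Finset ι} (hs : s.Nonempty) {f g : ι → ℝ}
    {δ : ℝ} (hδ : 0 ≤ δ) (hgf : ∀ i ∈ s, g i ≤ f i + δ) :
    max (s.sup' hs f) (s.sup' hs g) ≤ s.sup' hs f + δ :=
  max_le (le_add_of_nonneg_right hδ)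
    (Finset.sup'_le _ _ fun i hi => (hgf i hi).trans (by gcongr; exact Finset.le_sup' f hi))

theorem surrogate_population_loss_bound_after_gd_step_general
    {d m n : ℕ} (hm : 0 < m)
    (μ η : ℝ) (hμ : 0 < μ) (hη : 0 < η)
    (a : Fin m → ℝ) (ha : ∀ r, a r = 1 ∨ a r = -1)
    (ζ' : ℝ → ℝ) (hζ'le : ∀ z, |ζ' z| ≤ 1)
    (x : Fin n → EuclideanSpace ℝ (Fin d)) (hx : ∀ i, ‖x i‖ = 1)
    (v v' : EuclideanSpace ℝ (Fin n))
    (w w' : Fin m → EuclideanSpace ℝ (Fin d))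
    (hupd : ∀ r, w' r =
      w r - (η / μ) • ∑ i, (v i * a r * ζ' ⟪w r, x i⟫) • x i)
    (H : Matrix (Fin n) (Fin n) ℝ) (hPSD : H.PosSemidef)
    (heig : ∀ (lam : ℝ) (z : EuclideanSpace ℝ (Fin n)),
      z ≠ 0 → H.mulVec z = lam • z → η * lam ≤ 1)
    (u : EuclideanSpace ℝ (Fin n)) (hu : ‖u‖ = 1)
    (lam1 lamMinus : ℝ)
    (hu1 : H.mulVec u = lam1 • u)
    (hlam1 : lamMinus ≤ lam1)
    (hv' : v' = ((1 : Matrix (Fin n) (Fin n) ℝ) - η • H).mulVec v)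
    (M1 : ℝ) (hM1 : 0 ≤ M1)
    (A B ρ Φ ν1 ω1 : ℝ)
    (hA : A = |⟪v, u⟫|)
    (hB : B = ‖v - ⟪v, u⟫ • u‖)
    (hρ : ρ = 1 - η * lamMinus)
    (hΦ : Φ = 2 * m / (μ * Real.sqrt n))
    (hν1 : ν1 =
      4 * M1 * Φ * (Finset.univ.sup' ⟨⟨0, hm⟩, Finset.mem_univ _⟩ fun r => ‖w r‖)
        + 4 * M1 * (Φ / μ) * η * ∑ i, |v i|)
    (hω1 : ω1 = (ρ ^ 2 * A ^ 2 + B ^ 2) / n + ν1) :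
    ‖v'‖ ^ 2 / n + 4 * M1 * Φ *
      max (Finset.univ.sup' ⟨⟨0, hm⟩, Finset.mem_univ _⟩ fun r => ‖w r‖)
          (Finset.univ.sup' ⟨⟨0, hm⟩, Finset.mem_univ _⟩ fun r => ‖w' r‖) ≤ ω1 := by
  set T := toEuclideanLin (1 - η • H)
  have hT : T.IsSymmetric :=
    isSymmetric_toEuclideanLin_iff.mpr (isHermitian_one.sub (hPSD.1.smul rfl))
  have hTu : T u = (1 - η * lam1) • u := by
    ext j
    simp [T, hu1, sub_mul, mul_assoc]
  have hlam1_le : η * lam1 ≤ 1 := heig lam1 u (by rintro rfl; simp at hu) hu1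
  have hα : |1 - η * lam1| ≤ ρ := abs_le.mpr ⟨by nlinarith, by nlinarith⟩
  have hloss : ‖v'‖ ^ 2 ≤ ρ ^ 2 * A ^ 2 + B ^ 2 := by
    rw [hA, hB, sq_abs, show v' = T v from WithLp.ofLp_injective _ hv']
    exact hT.norm_sq_apply_le (hPSD.norm_toEuclideanLin_one_sub_smul_apply_le hη.le heig) hu hTu
      hα v
  have hstep : ∀ r, ‖w' r‖ ≤ ‖w r‖ + η / μ * ∑ i, |v i| := fun r => by
    have ha_abs : |a r| = 1 := by rcases ha r with h | h <;> simp [h]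
    simp_rw [hupd r, mul_assoc]
    exact norm_sub_smul_sum_mul_smul_le _ (fun i => (hx i).le) (by positivity) _
      fun i => by rw [abs_mul, ha_abs, one_mul]; exact hζ'le _
  have hweights := Finset.max_sup'_le_sup'_add ⟨⟨0, hm⟩, Finset.mem_univ _⟩ (by positivity)
    fun r _ => hstep r
  have hΦ_nonneg : 0 ≤ Φ := hΦ ▸ by positivity
  rw [hω1, hν1]
  calc _ ≤ (ρ ^ 2 * A ^ 2 + B ^ 2) / n + 4 * M1 * Φ *
        ((Finset.univ.sup' ⟨⟨0, hm⟩, Finset.mem_univ _⟩ fun r => ‖w r‖) + η / μ * ∑ i, |v i|) := by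
        gcongr
    _ = _ := by ring

/-- If, in addition to the two-layer-network gradient step,
the training-error vector evolves linearly as `v' = (I − η H) v` for a
symmetric PSD matrix `H` whose eigenvalues `λ` all satisfy `η λ ≤ 1`, with
unit eigenvector `u` of eigenvalue `λ₁ ≥ λ⁻ > 0`, then the surrogate
population loss after one step is at most
`ω₁ = (ρ² A² + B²)/n + ν₁`. -/
theorem surrogate_population_loss_bound_after_gd_step
    {d m n : ℕ} (hm : 0 < m) (hn : 0 < n)
    (μ η : ℝ) (hμ : 0 < μ) (hη : 0 < η)
    (a : Fin m → ℝ) (ha : ∀ r, a r = 1 ∨ a r = -1)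
    (ζ ζ' : ℝ → ℝ) (hζ : LipschitzWith 1 ζ) (hζ0 : ζ 0 = 0)
    (hderiv : ∀ z, HasDerivAt ζ (ζ' z) z) (hζ'le : ∀ z, |ζ' z| ≤ 1)
    (x : Fin n → EuclideanSpace ℝ (Fin d)) (hx : ∀ i, ‖x i‖ = 1)
    (v v' : EuclideanSpace ℝ (Fin n))
    (w w' : Fin m → EuclideanSpace ℝ (Fin d))
    (hupd : ∀ r, w' r =
      w r - (η / μ) • ∑ i, (v i * a r * ζ' ⟪w r, x i⟫) • x i)
    (H : Matrix (Fin n) (Fin n) ℝ) (hSym : H.IsSymm) (hPSD : H.PosSemidef)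
    (heig : ∀ (lam : ℝ) (z : EuclideanSpace ℝ (Fin n)),
      z ≠ 0 → H.mulVec z = lam • z → η * lam ≤ 1)
    (u : EuclideanSpace ℝ (Fin n)) (hu : ‖u‖ = 1)
    (lam1 lamMinus : ℝ)
    (hu1 : H.mulVec u = lam1 • u)
    (hlamMinus : 0 < lamMinus) (hlam1 : lamMinus ≤ lam1)
    (hv' : v' = ((1 : Matrix (Fin n) (Fin n) ℝ) - η • H).mulVec v)
    (M1 : ℝ) (hM1 : 0 ≤ M1)
    (A B ρ Φ ν1 ω1 : ℝ)
    (hA : A = |⟪v, u⟫|)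
    (hB : B = ‖v - ⟪v, u⟫ • u‖)
    (hρ : ρ = 1 - η * lamMinus)
    (hΦ : Φ = 2 * m / (μ * Real.sqrt n))
    (hν1 : ν1 =
      4 * M1 * Φ * (Finset.univ.sup' ⟨⟨0, hm⟩, Finset.mem_univ _⟩ fun r => ‖w r‖)
        + 4 * M1 * (Φ / μ) * η * ∑ i, |v i|)
    (hω1 : ω1 = (ρ ^ 2 * A ^ 2 + B ^ 2) / n + ν1) :
    ‖v'‖ ^ 2 / n + 4 * M1 * Φ *
      max (Finset.univ.sup' ⟨⟨0, hm⟩, Finset.mem_univ _⟩ fun r => ‖w r‖)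
          (Finset.univ.sup' ⟨⟨0, hm⟩, Finset.mem_univ _⟩ fun r => ‖w' r‖) ≤ ω1 :=
  surrogate_population_loss_bound_after_gd_step_general hm μ η hμ hη a ha ζ' hζ'le x hx v v' w w'
    hupd H hPSD heig u hu lam1 lamMinus hu1 hlam1 hv' M1 hM1 A B ρ Φ ν1 ω1 hA hB hρ hΦ hν1 hω1
end
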